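/- For every permutation σ of {1,2} and every non-negative integer n, θ(F_σ(n+1)) ⊆ F_σ(n). -/

import Mathlib

/-!
`θ` sends `Vᵢ` into `Vᵢ₊₁` and `Wⱼ` into `Wⱼ₊₁` (indices mod 2) and kills every `Vᵢ ∩ Wⱼ`.
A linear map `T` with `T F ⊆ F'`, `T A ⊆ A'`, `T B ⊆ B'` sends `(F + A) ∩ (F + B)` into
`(F' + A') ∩ (F' + B')`. Since `σ (i + 1) = σ i + 1` for both permutations of `Fin 2`, each
summand of `F_σ(n+2)` is mapped into a summand of `F_σ(n+1)` once `θ F_σ(n+1) ⊆ F_σ(n)` is known,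
and the claim follows by induction on `n`.
-/

open Submodule

/-- The projection onto `A` along a complement `B`, as an endomorphism of `E`. -/
noncomputable def projAlong {K E : Type*} [Field K] [AddCommGroup E] [Module K E]
    (A B : Submodule K E) (h : IsCompl A B) : E →ₗ[K] E :=
  A.subtype ∘ₗ A.linearProjOfIsCompl B h

/-- `θ = p_{W₁}^{W₂} ∘ p_{V₁}^{V₂} − p_{V₁}^{V₂} ∘ p_{W₁}^{W₂}`. -/
noncomputable def theta {K E : Type*} [Field K] [AddCommGroup E] [Module K E]
    (V W : Fin 2 → Submodule K E)
    (hV : IsCompl (V 0) (V 1)) (hW : IsCompl (W 0) (W 1)) : Module.End K E :=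
  projAlong (W 0) (W 1) hW ∘ₗ projAlong (V 0) (V 1) hV -
    projAlong (V 0) (V 1) hV ∘ₗ projAlong (W 0) (W 1) hW

/-- For a permutation `σ` of `{1,2}`, the increasing sequence of subspaces `F_σ(n)`:
`F_σ(0) = ⊥`, `F_σ(n+1) = Σ_i (F_σ(n) + Vᵢ) ⊓ (F_σ(n) + W_{σ(i)})`. -/
noncomputable def Fsig {K E : Type*} [Field K] [AddCommGroup E] [Module K E]
    (V W : Fin 2 → Submodule K E) (σ : Equiv.Perm (Fin 2)) : ℕ → Submodule K E
  | 0 => ⊥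
  | n + 1 => ⨆ i : Fin 2, (Fsig V W σ n ⊔ V i) ⊓ (Fsig V W σ n ⊔ W (σ i))

lemma Submodule.map_sup_inf_sup_le {R M N : Type*} [Ring R] [AddCommGroup M] [Module R M]
    [AddCommGroup N] [Module R N] (T : M →ₗ[R] N) {F A B : Submodule R M}
    {F' A' B' : Submodule R N} (hF : F.map T ≤ F') (hA : A.map T ≤ A') (hB : B.map T ≤ B') :
    ((F ⊔ A) ⊓ (F ⊔ B)).map T ≤ (F' ⊔ A') ⊓ (F' ⊔ B') := by
  rintro _ ⟨x, ⟨hxA, hxB⟩, rfl⟩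
  obtain ⟨f, hf, a, ha, rfl⟩ := mem_sup.mp hxA
  obtain ⟨g, hg, b, hb, hgb⟩ := mem_sup.mp hxB
  have hTf : T f ∈ F' := hF (mem_map_of_mem hf)
  have hTa : T a ∈ A' := hA (mem_map_of_mem ha)
  -- `a - b = g - f` lies in `F`, so `T a` differs from `T b ∈ B'` by an element of `F'`.
  have hTab : T (a - b) ∈ F' := by
    have hab : a - b = g - f := by rw [sub_eq_sub_iff_add_eq_add, hgb, add_comm]
    exact hF (mem_map_of_mem (hab ▸ sub_mem hg hf))
  have hTb : T b ∈ B' := hB (mem_map_of_mem hb)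
  rw [map_add]
  refine ⟨add_mem (mem_sup_left hTf) (mem_sup_right hTa), add_mem (mem_sup_left hTf) ?_⟩
  rw [show T a = T (a - b) + T b by simp]
  exact add_mem (mem_sup_left hTab) (mem_sup_right hTb)

lemma Equiv.Perm.fin_two_apply_add_one (σ : Equiv.Perm (Fin 2)) (i : Fin 2) :
    σ (i + 1) = σ i + 1 := by
  revert σ i
  decide

section theta

variable {K E : Type*} [Field K] [AddCommGroup E] [Module K E]
variable {V W : Fin 2 → Submodule K E} (hV : IsCompl (V 0) (V 1)) (hW : IsCompl (W 0) (W 1))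

lemma theta_apply (x : E) : theta V W hV hW x =
    (W 0).projection (W 1) hW ((V 0).projection (V 1) hV x) -
      (V 0).projection (V 1) hV ((W 0).projection (W 1) hW x) := rfl

lemma theta_swap : theta W V hW hV = -theta V W hV hW := by
  rw [theta, theta, neg_sub]

lemma map_theta_V_le (i : Fin 2) : (V i).map (theta V W hV hW) ≤ V (i + 1) := by
  rintro _ ⟨x, hx, rfl⟩
  fin_cases i
  · rw [theta_apply, projection_apply_of_mem_left hV hx]
    exact sub_projection_mem hV _
  · rw [theta_apply, projection_apply_of_mem_right hV hx, map_zero, zero_sub]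
    exact neg_mem (projection_apply_mem hV _)

lemma map_theta_W_le (j : Fin 2) : (W j).map (theta V W hV hW) ≤ W (j + 1) := by
  rw [← neg_neg (theta V W hV hW), ← theta_swap, Submodule.map_neg]
  exact map_theta_V_le hW hV j

lemma map_theta_inf_eq_bot (i j : Fin 2) : (V i ⊓ W j).map (theta V W hV hW) = ⊥ := by
  refine eq_bot_iff.mpr ?_
  rintro _ ⟨x, ⟨hxV, hxW⟩, rfl⟩
  -- On `x`, both projections act as the identity or as zero, so they commute.
  fin_cases i <;> fin_cases j <;>
    simp_all [theta_apply, projection_apply_of_mem_left, projection_apply_of_mem_right]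

end theta

theorem stmt5_general {K E : Type*} [Field K] [AddCommGroup E] [Module K E]
    (V W : Fin 2 → Submodule K E)
    (hV : IsCompl (V 0) (V 1)) (hW : IsCompl (W 0) (W 1)) :
    ∀ (σ : Equiv.Perm (Fin 2)) (n : ℕ),
      (Fsig V W σ (n + 1)).map (theta V W hV hW) ≤ Fsig V W σ n := by
  intro σ n
  induction n with
  | zero =>
    simp only [Fsig, bot_sup_eq, Submodule.map_iSup, map_theta_inf_eq_bot, iSup_bot, le_refl]
  | succ n ih =>
    rw [Fsig, Submodule.map_iSup, Fsig]
    refine iSup_le fun i => le_iSup_of_le (i + 1) ?_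
    rw [σ.fin_two_apply_add_one]
    exact map_sup_inf_sup_le _ ih (map_theta_V_le hV hW i) (map_theta_W_le hV hW (σ i))

/-- For every permutation `σ` of `{1,2}` and every `n`, `θ(F_σ(n+1)) ⊆ F_σ(n)`. -/
theorem stmt5 {K E : Type*} [Field K] [AddCommGroup E] [Module K E]
    [FiniteDimensional K E] (hchar : (2 : K) ≠ 0)
    (V W : Fin 2 → Submodule K E)
    (hV : IsCompl (V 0) (V 1)) (hW : IsCompl (W 0) (W 1)) :
    ∀ (σ : Equiv.Perm (Fin 2)) (n : ℕ),
      (Fsig V W σ (n + 1)).map (theta V W hV hW) ≤ Fsig V W σ n :=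
  stmt5_general V W hV hW
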